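/- Let (G,T) be a bipartite graft with color classes A and B, let F be a minimum join of (G,T), and let X ⊆ V(G) be a maximal bipartitic extreme set. Let (Ĝ, T̂) be the rootlization of (G,T) by the mount X, the root r, and the attachment s, and let F̂ = F ∪ {rs}, X̂ = X ∪ {r}, D̂_X = D_X ∪ {s}. Then the subgraph of Ĝ induced by X̂ ∪ D̂_X is the initial component of r in (Ĝ,T̂), and A(r) = X̂ and D(r) = D̂_X hold (computed in (Ĝ,T̂) with respect to F̂). -/

import Mathlib

open scoped Classical

variable {V : Type*}

/-- The `F`-weight of a walk: number of edges outside `F` minus number of edges in `F`. -/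
noncomputable def walkWeight {G : SimpleGraph V} (F : Set (Sym2 V)) {x y : V}
    (p : G.Walk x y) : ℤ :=
  ((p.edges.filter fun e => e ∉ F).length : ℤ) -
    ((p.edges.filter fun e => e ∈ F).length : ℤ)

/-- The `F`-distance between `x` and `y`: the minimum `F`-weight of a path between them. -/
noncomputable def distF (G : SimpleGraph V) (F : Set (Sym2 V)) (x y : V) : ℤ :=
  sInf {w : ℤ | ∃ p : G.Walk x y, p.IsPath ∧ walkWeight F p = w}

/-- `F` is a join of the graft `(G, T)`. -/
def IsJoin (G : SimpleGraph V) (T : Set V) (F : Set (Sym2 V)) : Prop :=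
  F ⊆ G.edgeSet ∧ ∀ v : V, v ∈ T ↔ Odd {e ∈ F | v ∈ e}.ncard

/-- `F` is a minimum join of the graft `(G, T)`. -/
def IsMinJoin (G : SimpleGraph V) (T : Set V) (F : Set (Sym2 V)) : Prop :=
  IsJoin G T F ∧ ∀ F' : Set (Sym2 V), IsJoin G T F' → F.ncard ≤ F'.ncard

/-- `(G, T)` is a graft: every connected component contains an even number of vertices of `T`. -/
def IsGraft (G : SimpleGraph V) (T : Set V) : Prop :=
  ∀ v : V, Even {u | u ∈ T ∧ G.Reachable v u}.ncard

/-- `X` is an extreme set: `d_F(x, y) ≥ 0` for all `x, y ∈ X`. -/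
def IsExtremeSet (G : SimpleGraph V) (F : Set (Sym2 V)) (X : Set V) : Prop :=
  ∀ x ∈ X, ∀ y ∈ X, 0 ≤ distF G F x y

/-- `G` is bipartite with vertex set `Vset` and color classes `A`, `B`. -/
def IsBipartitionOn (G : SimpleGraph V) (Vset A B : Set V) : Prop :=
  A ∪ B = Vset ∧ Disjoint A B ∧
    ∀ v w : V, G.Adj v w → (v ∈ A ∧ w ∈ B) ∨ (v ∈ B ∧ w ∈ A)

/-- `X` is a maximal bipartitic extreme set with respect to color classes `A`, `B`. -/
def MaxBipExtreme (G : SimpleGraph V) (F : Set (Sym2 V)) (A B X : Set V) : Prop :=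
  IsExtremeSet G F X ∧ (X ⊆ A ∨ X ⊆ B) ∧
    ∀ X' : Set V, IsExtremeSet G F X' → (X' ⊆ A ∨ X' ⊆ B) → X ⊆ X' → X' = X

/-- `D_X`: the vertices of `Vset ∖ X` at negative `F`-distance from `X`. -/
def Dset (G : SimpleGraph V) (F : Set (Sym2 V)) (Vset X : Set V) : Set V :=
  {y | y ∈ Vset ∧ y ∉ X ∧ ∃ x ∈ X, distF G F x y < 0}

/-- `C_X = Vset ∖ X ∖ D_X`. -/
def Cset (G : SimpleGraph V) (F : Set (Sym2 V)) (Vset X : Set V) : Set V :=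
  (Vset \ X) \ Dset G F Vset X

/-- `min_{x ∈ X} d_F(x, y)`. -/
noncomputable def minDistX (G : SimpleGraph V) (F : Set (Sym2 V)) (X : Set V) (y : V) : ℤ :=
  sInf {d : ℤ | ∃ x ∈ X, distF G F x y = d}

/-- The graph `G − S` obtained by deleting the vertices of `S`. -/
def gDelete (G : SimpleGraph V) (S : Set V) : SimpleGraph V where
  Adj v w := G.Adj v w ∧ v ∉ S ∧ w ∉ S
  symm := ⟨fun v w ⟨h, hv, hw⟩ => ⟨h.symm, hw, hv⟩⟩
  loopless := ⟨fun v h => G.loopless.irrefl v h.1⟩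

/-- The subgraph of `G` induced by `S`. -/
def gRestrict (G : SimpleGraph V) (S : Set V) : SimpleGraph V where
  Adj v w := G.Adj v w ∧ v ∈ S ∧ w ∈ S
  symm := ⟨fun v w ⟨h, hv, hw⟩ => ⟨h.symm, hw, hv⟩⟩
  loopless := ⟨fun v h => G.loopless.irrefl v h.1⟩

/-- `C` is (the vertex set of) a connected component of `G − X`. -/
def IsCompOf (G : SimpleGraph V) (X C : Set V) : Prop :=
  ∃ v, v ∉ X ∧ C = {u | (gDelete G X).Reachable v u}

/-- `δ_G(C)`: the edges of `G` with exactly one end in `C`. -/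
def edgeBoundary (G : SimpleGraph V) (C : Set V) : Set (Sym2 V) :=
  {e | e ∈ G.edgeSet ∧ ∃ u v : V, e = s(u, v) ∧ u ∈ C ∧ v ∉ C}

/-- `X` is an `F`-combic set of the graft `(G, T)`. -/
def IsCombic (G : SimpleGraph V) (T : Set V) (F : Set (Sym2 V)) (X : Set V) : Prop :=
  (∀ u v : V, s(u, v) ∈ F → ¬(u ∈ X ∧ v ∈ X)) ∧
  (∀ C : Set V, IsCompOf G X C → Odd (C ∩ T).ncard →
      (edgeBoundary G C ∩ F).ncard = 1) ∧
  (∀ C : Set V, IsCompOf G X C → Even (C ∩ T).ncard →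
      edgeBoundary G C ∩ F = ∅)

/-- The rootlization of `G` by the mount `X`, root `r` and attachment `s`. -/
def rootlize (G : SimpleGraph V) (X : Set V) (r s : V) : SimpleGraph V :=
  SimpleGraph.fromRel fun v w => G.Adj v w ∨ (v = r ∧ w = s) ∨ (v = s ∧ w ∈ X)

/-- The initial component of `r`: the connected component of `r` in the subgraph
induced by the vertices at nonpositive `F`-distance from `r`. -/
def initComp (G : SimpleGraph V) (F : Set (Sym2 V)) (r : V) : Set V :=
  {x | (gRestrict G {y | distF G F r y ≤ 0}).Reachable r x}

/-!
Every path of `Ĝ` from `r` to a vertex `y` of `G` runs `r, s, x` with `x ∈ X` and then along a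
path of `G`; as `rs ∈ F̂` and `sx ∉ F̂`, it has the same weight as that path of `G`. So the
`F̂`-distance `d̂(r, y)` is the least `F`-weight of a path from `X` to `y`: it vanishes on `X̂`,
is negative on `D̂_X`, and is positive on every other vertex reachable from `r`, because a path
of weight zero from `X` has even length and its end could be added to `X`, against maximality.
A minimum join leaves no negative cycle, so `d̂` grows by at most one along an edge; walking from
a vertex of `D_X` back to `X` therefore never leaves the vertices at nonpositive distance, and
`D_X` lies in the initial component of `r`.
-/

open SimpleGraph

lemma Set.ncard_symmDiff_add_two_mul {α : Type*} [Finite α] (A B : Set α) :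
    (symmDiff A B).ncard + 2 * (A ∩ B).ncard = A.ncard + B.ncard := by
  have hsub : A ∩ B ⊆ A ∪ B := Set.inter_subset_left.trans Set.subset_union_left
  have hdiff := Set.ncard_sdiff hsub
  have hle := Set.ncard_le_ncard hsub
  have hsum := Set.ncard_union_add_ncard_inter A B
  rw [symmDiff_eq_sup_sdiff_inf]
  change ((A ∪ B) \ (A ∩ B)).ncard + _ = _
  omega

lemma List.Nodup.length_filter_eq_ncard {α : Type*} {l : List α} (hl : l.Nodup) (P : α → Prop)
    [DecidablePred P] : (l.filter fun a => P a).length = {a | a ∈ l ∧ P a}.ncard := by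
  have : {a | a ∈ l ∧ P a} = ↑(l.filter fun a => P a).toFinset := by ext; simp
  rw [this, Set.ncard_coe_finset, List.toFinset_card_of_nodup (hl.filter _)]

section Development

variable {G H : SimpleGraph V} {F : Set (Sym2 V)} {u v x y z r s : V}

@[simp] lemma walkWeight_nil : walkWeight F (Walk.nil : G.Walk x x) = 0 := by
  simp [walkWeight]

lemma walkWeight_cons (h : G.Adj x y) (p : G.Walk y z) :
    walkWeight F (Walk.cons h p) = (if s(x, y) ∈ F then -1 else 1) + walkWeight F p := by
  by_cases he : s(x, y) ∈ F <;> simp [walkWeight, he] <;> ring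

lemma walkWeight_append (p : G.Walk x y) (q : G.Walk y z) :
    walkWeight F (p.append q) = walkWeight F p + walkWeight F q := by
  simp only [walkWeight, Walk.edges_append, List.filter_append, List.length_append]
  push_cast
  ring

lemma walkWeight_reverse (p : G.Walk x y) : walkWeight F p.reverse = walkWeight F p := by
  simp [walkWeight, Walk.edges_reverse, List.filter_reverse]

lemma walkWeight_transfer (p : G.Walk x y) (hp : ∀ e ∈ p.edges, e ∈ H.edgeSet) :
    walkWeight F (p.transfer H hp) = walkWeight F p := by
  simp [walkWeight, Walk.edges_transfer]

lemma walkWeight_congr {F' : Set (Sym2 V)} (p : G.Walk x y)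
    (h : ∀ e ∈ p.edges, e ∈ F ↔ e ∈ F') : walkWeight F p = walkWeight F' p := by
  have hout : p.edges.filter (fun e => e ∉ F) = p.edges.filter (fun e => e ∉ F') :=
    List.filter_congr fun e he => by simp [h e he]
  have hin : p.edges.filter (fun e => e ∈ F) = p.edges.filter (fun e => e ∈ F') :=
    List.filter_congr fun e he => by simp [h e he]
  rw [walkWeight, walkWeight, hout, hin]

lemma walkWeight_union_singleton (p : G.Walk x y) {e : Sym2 V} (he : e ∉ p.edges) :
    walkWeight (F ∪ {e}) p = walkWeight F p :=
  walkWeight_congr p fun e' he' => by simp [show e' ≠ e from fun h => he (h ▸ he')]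

lemma walkWeight_eq_length_sub (p : G.Walk x y) :
    walkWeight F p = p.length - 2 * (p.edges.filter (· ∈ F)).length := by
  have := List.length_eq_length_filter_add (l := p.edges) (fun e => decide (e ∈ F))
  simp only [Walk.length_edges] at this
  simp only [walkWeight, decide_not]
  omega

lemma neg_length_le_walkWeight (p : G.Walk x y) : -(p.length : ℤ) ≤ walkWeight F p := by
  have := p.edges.length_filter_le (· ∈ F)
  rw [walkWeight_eq_length_sub, ← p.length_edges]
  omega

lemma even_length_of_walkWeight_eq_zero {p : G.Walk x y} (h : walkWeight F p = 0) :
    Even p.length := by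
  rw [walkWeight_eq_length_sub] at h
  exact ⟨(p.edges.filter (· ∈ F)).length, by omega⟩

lemma le_distF {c : ℤ} (hxy : G.Reachable x y)
    (h : ∀ p : G.Walk x y, p.IsPath → c ≤ walkWeight F p) : c ≤ distF G F x y := by
  obtain ⟨p, hp⟩ := hxy.exists_isPath
  exact le_csInf ⟨_, p, hp, rfl⟩ (by rintro _ ⟨q, hq, rfl⟩; exact h q hq)

lemma reachable_of_distF_ne_zero (h : distF G F x y ≠ 0) : G.Reachable x y := by
  by_contra hxy
  have : {w : ℤ | ∃ p : G.Walk x y, p.IsPath ∧ walkWeight F p = w} = ∅ :=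
    Set.eq_empty_of_forall_notMem fun _ ⟨p, _, _⟩ => hxy ⟨p⟩
  exact h (by rw [distF, this, Int.csInf_empty])

lemma distF_comm : distF G F x y = distF G F y x := by
  unfold distF
  congr 1
  ext w
  constructor <;> rintro ⟨p, hp, rfl⟩ <;> exact ⟨p.reverse, hp.reverse, walkWeight_reverse p⟩

lemma distF_self : distF G F x x = 0 := by
  have : {w : ℤ | ∃ p : G.Walk x x, p.IsPath ∧ walkWeight F p = w} = {0} := by
    ext w
    constructor
    · rintro ⟨p, hp, rfl⟩
      simp [Walk.isPath_iff_nil.1 hp |>.eq_nil]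
    · rintro rfl
      exact ⟨.nil, .nil, walkWeight_nil⟩
  rw [distF, this, csInf_singleton]


section Distance

variable [Fintype V]

lemma bddBelow_pathWeights :
    BddBelow {w : ℤ | ∃ p : G.Walk x y, p.IsPath ∧ walkWeight F p = w} := by
  refine ⟨-(Fintype.card V : ℤ), ?_⟩
  rintro _ ⟨p, hp, rfl⟩
  have := hp.length_lt
  have := neg_length_le_walkWeight (F := F) p
  omega

lemma distF_le_walkWeight {p : G.Walk x y} (hp : p.IsPath) : distF G F x y ≤ walkWeight F p :=
  csInf_le bddBelow_pathWeights ⟨p, hp, rfl⟩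

lemma exists_isPath_walkWeight_eq_distF (hxy : G.Reachable x y) :
    ∃ p : G.Walk x y, p.IsPath ∧ walkWeight F p = distF G F x y := by
  obtain ⟨p, hp⟩ := hxy.exists_isPath
  exact Int.csInf_mem (s := {w | ∃ p : G.Walk x y, p.IsPath ∧ walkWeight F p = w})
    ⟨_, p, hp, rfl⟩ bddBelow_pathWeights

end Distance

lemma SimpleGraph.Walk.IsTrail.walkWeight_eq_ncard {c : G.Walk x y} (hc : c.IsTrail) :
    walkWeight F c = ({e | e ∈ c.edges} \ F).ncard - ({e | e ∈ c.edges} ∩ F).ncard := by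
  rw [walkWeight, hc.edges_nodup.length_filter_eq_ncard, hc.edges_nodup.length_filter_eq_ncard]
  rfl

section MinJoin

variable [Fintype V] {T : Set V}

lemma IsJoin.symmDiff_edges (hF : IsJoin G T F) {c : G.Walk u u} (hc : c.IsTrail) :
    IsJoin G T (symmDiff F {e | e ∈ c.edges}) := by
  refine ⟨?_, fun v => ?_⟩
  · rintro e (⟨he, -⟩ | ⟨he, -⟩)
    exacts [hF.1 he, c.edges_subset_edgeSet he]
  have hsplit : {e ∈ symmDiff F {e | e ∈ c.edges} | v ∈ e} =
      symmDiff {e ∈ F | v ∈ e} {e | e ∈ c.edges ∧ v ∈ e} := by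
    ext e
    simp only [Set.mem_symmDiff, Set.mem_ofPred_eq]
    tauto
  obtain ⟨k, hk⟩ : Even {e | e ∈ c.edges ∧ v ∈ e}.ncard := by
    rw [← hc.edges_nodup.length_filter_eq_ncard, ← List.countP_eq_length_filter]
    convert (hc.even_countP_edges_iff v).2 fun h => absurd rfl h
  have := Set.ncard_symmDiff_add_two_mul {e ∈ F | v ∈ e} {e | e ∈ c.edges ∧ v ∈ e}
  rw [hF.2 v, hsplit, Nat.odd_iff, Nat.odd_iff]
  omega

lemma IsMinJoin.walkWeight_nonneg (hF : IsMinJoin G T F) {c : G.Walk u u} (hc : c.IsTrail) :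
    0 ≤ walkWeight F c := by
  -- switching `F` along `c` gives a join with `|F| + w_F(c)` edges
  have hmin := hF.2 _ (hF.1.symmDiff_edges hc)
  have hsymm := Set.ncard_symmDiff_add_two_mul F {e | e ∈ c.edges}
  have hpart := Set.ncard_inter_add_ncard_sdiff_eq_ncard {e | e ∈ c.edges} F
  rw [Set.inter_comm] at hsymm
  rw [hc.walkWeight_eq_ncard]
  omega

lemma IsMinJoin.neg_one_le_walkWeight (hF : IsMinJoin G T F) {p : G.Walk y x} (hp : p.IsPath)
    (h : G.Adj x y) : -1 ≤ walkWeight F p := by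
  by_cases he : s(x, y) ∈ p.edges
  · rw [Sym2.eq_swap] at he
    rw [hp.eq_adj_toWalk_of_mem_edges he, Adj.toWalk, walkWeight_cons, walkWeight_nil]
    split_ifs <;> omega
  · have := hF.walkWeight_nonneg ((Walk.cons_isCycle_iff p h).2 ⟨hp, he⟩).isTrail
    rw [walkWeight_cons] at this
    split_ifs at this <;> omega

lemma IsMinJoin.exists_isPath_walkWeight_le_add_one (hF : IsMinJoin G T F) {p : G.Walk u x}
    (hp : p.IsPath) (h : G.Adj x y) :
    ∃ q : G.Walk u y, q.IsPath ∧ walkWeight F q ≤ walkWeight F p + 1 := by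
  by_cases hy : y ∈ p.support
  · refine ⟨p.takeUntil y hy, hp.takeUntil hy, ?_⟩
    have := hF.neg_one_le_walkWeight (hp.dropUntil hy) h
    have hsplit := congrArg (walkWeight F) (p.take_spec hy)
    rw [walkWeight_append] at hsplit
    omega
  · refine ⟨p.concat h, hp.concat hy h, ?_⟩
    rw [Walk.concat_eq_append, walkWeight_append, walkWeight_cons, walkWeight_nil]
    split_ifs <;> omega

end MinJoin

lemma IsBipartitionOn.symm {Vg A B : Set V} (hbip : IsBipartitionOn G Vg A B) :
    IsBipartitionOn G Vg B A :=
  ⟨Set.union_comm B A ▸ hbip.1, hbip.2.1.symm, fun v w hvw => (hbip.2.2 v w hvw).symm⟩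

lemma IsBipartitionOn.mem_iff_of_even_length {Vg A B : Set V} (hbip : IsBipartitionOn G Vg A B)
    (p : G.Walk u v) (hp : Even p.length) : u ∈ A ↔ v ∈ A := by
  have hvalid : ∀ {a b : V}, G.Adj a b → decide (a ∈ A) ≠ decide (b ∈ A) := fun {a b} hab => by
    rcases hbip.2.2 a b hab with ⟨ha, hb⟩ | ⟨ha, hb⟩
    · simp [ha, Set.disjoint_right.1 hbip.2.1 hb]
    · simp [hb, Set.disjoint_right.1 hbip.2.1 ha]
  have := ((Coloring.mk (fun v => decide (v ∈ A)) hvalid).even_length_iff_congr p).1 hp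
  simpa [Coloring.mk] using this

lemma IsExtremeSet.insert {X : Set V} (hX : IsExtremeSet G F X)
    (hy : ∀ x ∈ X, 0 ≤ distF G F x y) : IsExtremeSet G F (insert y X) := by
  rintro a (rfl | ha) b (rfl | hb)
  · rw [distF_self]
  · rw [distF_comm]
    exact hy b hb
  · exact hy a ha
  · exact hX a ha b hb

lemma MaxBipExtreme.mem_of_even_length {Vg A B X : Set V} (hX : MaxBipExtreme G F A B X)
    (hbip : IsBipartitionOn G Vg A B) (hx : x ∈ X) (p : G.Walk x y) (hp : Even p.length)
    (hy : ∀ x ∈ X, 0 ≤ distF G F x y) : y ∈ X := by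
  have hclass : insert y X ⊆ A ∨ insert y X ⊆ B := by
    rcases hX.2.1 with hXA | hXB
    · exact .inl (Set.insert_subset ((hbip.mem_iff_of_even_length p hp).1 (hXA hx)) hXA)
    · exact .inr (Set.insert_subset ((hbip.symm.mem_iff_of_even_length p hp).1 (hXB hx)) hXB)
  rw [← hX.2.2 _ (hX.1.insert hy) hclass (Set.subset_insert y X)]
  exact Set.mem_insert y X

lemma gRestrict_le {H : SimpleGraph V} {S : Set V} : gRestrict H S ≤ H := fun _ _ h => h.1

lemma mem_of_gRestrict_reachable {H : SimpleGraph V} {S : Set V}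
    (h : (gRestrict H S).Reachable u v) (huv : u ≠ v) : v ∈ S := by
  obtain ⟨p⟩ := h.symm
  cases p with
  | nil => exact absurd rfl huv
  | cons h' _ => exact h'.2.1

lemma self_mem_initComp : r ∈ initComp H F r := Reachable.refl r

lemma reachable_of_mem_initComp (hu : u ∈ initComp H F r) : H.Reachable r u :=
  hu.mono gRestrict_le

lemma distF_nonpos_of_mem_initComp (hu : u ∈ initComp H F r) : distF H F r u ≤ 0 := by
  by_cases hur : r = u
  · rw [← hur, distF_self]
  · exact mem_of_gRestrict_reachable (S := {y | distF H F r y ≤ 0}) hu hur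

lemma mem_initComp_of_adj (hu : u ∈ initComp H F r) (huv : H.Adj u v) (hv : distF H F r v ≤ 0) :
    v ∈ initComp H F r :=
  Reachable.trans hu (Adj.reachable ⟨huv, distF_nonpos_of_mem_initComp hu, hv⟩)

section Rootlization

variable {Vg T A B X : Set V} (hGV : ∀ v w : V, G.Adj v w → v ∈ Vg ∧ w ∈ Vg) (hXV : X ⊆ Vg)
  (hr : r ∉ Vg) (hs : s ∉ Vg) (hrs : r ≠ s) (hFE : F ⊆ G.edgeSet)

local notation "Ĝ" => rootlize G X r s
local notation "F̂" => F ∪ {s(r, s)}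

include hGV in
lemma mem_of_mem_support_of_start_mem {q : G.Walk x y} (hx : x ∈ Vg) :
    ∀ z ∈ q.support, z ∈ Vg := by
  induction q with
  | nil => simpa using hx
  | cons h _ ih =>
    rintro z (_ | ⟨_, hz⟩)
    exacts [hx, ih (hGV _ _ h).2 z hz]

lemma le_rootlize : G ≤ Ĝ := fun _ _ h => by
  rw [rootlize, fromRel_adj]
  exact ⟨h.ne, .inl (.inl h)⟩

include hrs in
lemma rootlize_adj_root_attach : (Ĝ).Adj r s := by
  rw [rootlize, fromRel_adj]
  exact ⟨hrs, .inl (.inr (.inl ⟨rfl, rfl⟩))⟩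

include hXV hs in
lemma rootlize_adj_attach_of_mem (hx : x ∈ X) : (Ĝ).Adj s x := by
  rw [rootlize, fromRel_adj]
  exact ⟨fun h => hs (h ▸ hXV hx), .inl (.inr (.inr ⟨rfl, hx⟩))⟩

lemma rootlize_adj_iff_of_ne (hur : u ≠ r) (hus : u ≠ s) (hvr : v ≠ r) (hvs : v ≠ s) :
    (Ĝ).Adj u v ↔ G.Adj u v := by
  simp only [rootlize, fromRel_adj, hur, hus, hvr, hvs, false_and, or_false]
  exact ⟨fun h => h.2.elim id (·.symm), fun h => ⟨h.ne, .inl h⟩⟩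

include hGV hr hrs in
lemma eq_attach_of_rootlize_adj_root (h : (Ĝ).Adj r v) : v = s := by
  rw [rootlize, fromRel_adj] at h
  obtain ⟨-, (h | ⟨-, rfl⟩ | ⟨rfl, -⟩) | (h | ⟨rfl, rfl⟩ | ⟨rfl, -⟩)⟩ := h
  · exact absurd (hGV _ _ h).1 hr
  · rfl
  · exact absurd rfl hrs
  · exact absurd (hGV _ _ h).2 hr
  · rfl
  · rfl

include hGV hs in
lemma eq_root_or_mem_of_rootlize_adj_attach (h : (Ĝ).Adj s v) : v = r ∨ v ∈ X := by
  rw [rootlize, fromRel_adj] at h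
  obtain ⟨hsv, (h | ⟨-, rfl⟩ | ⟨-, hv⟩) | (h | ⟨hv, -⟩ | ⟨rfl, -⟩)⟩ := h
  · exact absurd (hGV _ _ h).1 hs
  · exact absurd rfl hsv
  · exact .inr hv
  · exact absurd (hGV _ _ h).2 hs
  · exact .inl hv
  · exact absurd rfl hsv

include hGV hXV in
lemma mem_of_rootlize_adj (h : (Ĝ).Adj u v) (hvr : v ≠ r) (hvs : v ≠ s) : v ∈ Vg := by
  rw [rootlize, fromRel_adj] at h
  obtain ⟨-, (h | ⟨-, rfl⟩ | ⟨-, hv⟩) | (h | ⟨rfl, -⟩ | ⟨rfl, -⟩)⟩ := h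
  · exact (hGV _ _ h).2
  · exact absurd rfl hvs
  · exact hXV hv
  · exact (hGV _ _ h).1
  · exact absurd rfl hvr
  · exact absurd rfl hvs

include hGV hXV in
lemma mem_of_rootlize_reachable (h : (Ĝ).Reachable r y) (hyr : y ≠ r) (hys : y ≠ s) :
    y ∈ Vg := by
  obtain ⟨p⟩ := h.symm
  cases p with
  | nil => exact absurd rfl hyr
  | cons h' _ => exact mem_of_rootlize_adj hGV hXV h'.symm hyr hys

include hGV hXV hr hs hrs hFE in
lemma walkWeight_rootlize_cons_cons (hx : x ∈ X) (h₁ : (Ĝ).Adj r s) (h₂ : (Ĝ).Adj s x)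
    (q : (Ĝ).Walk x y) (hrq : r ∉ q.support) :
    walkWeight F̂ (.cons h₁ (.cons h₂ q)) = walkWeight F q := by
  have hsx : s(s, x) ∉ F̂ := by
    rintro (h | h)
    · exact hs (hGV _ _ (hFE h)).1
    · rcases Sym2.eq_iff.1 h with ⟨rfl, -⟩ | ⟨-, rfl⟩
      exacts [hrs rfl, hr (hXV hx)]
  rw [walkWeight_cons, walkWeight_cons, if_pos (.inr rfl), if_neg hsx,
    walkWeight_union_singleton q fun h => hrq (q.fst_mem_support_of_mem_edges h)]
  ring

include hGV hXV hr hs hrs hFE in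
lemma exists_rootlize_path_of_path (hx : x ∈ X) {q : G.Walk x y} (hq : q.IsPath) :
    ∃ p : (Ĝ).Walk r y, p.IsPath ∧ walkWeight F̂ p = walkWeight F q := by
  have hqV := mem_of_mem_support_of_start_mem hGV (q := q) (hXV hx)
  have hG : ∀ e ∈ q.edges, e ∈ (Ĝ).edgeSet :=
    fun e he => edgeSet_mono le_rootlize (q.edges_subset_edgeSet he)
  have hrq : r ∉ (q.transfer Ĝ hG).support := by
    rw [Walk.support_transfer]
    exact fun h => hr (hqV r h)
  refine ⟨.cons (rootlize_adj_root_attach hrs)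
    (.cons (rootlize_adj_attach_of_mem hXV hs hx) (q.transfer Ĝ hG)), ?_, ?_⟩
  · simp only [Walk.cons_isPath_iff, Walk.support_cons, List.mem_cons, not_or]
    rw [Walk.support_transfer] at hrq ⊢
    exact ⟨⟨hq.transfer hG, fun h => hs (hqV s h)⟩, hrs, hrq⟩
  · rw [walkWeight_rootlize_cons_cons hGV hXV hr hs hrs hFE hx _ _ _ hrq, walkWeight_transfer]

include hGV hXV hr hs hrs hFE in
lemma exists_path_of_rootlize_path {p : (Ĝ).Walk r y} (hp : p.IsPath) (hyr : y ≠ r)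
    (hys : y ≠ s) : ∃ x ∈ X, ∃ q : G.Walk x y, q.IsPath ∧ walkWeight F q = walkWeight F̂ p := by
  cases p with
  | nil => exact absurd rfl hyr
  | @cons _ c _ h₁ p₁ =>
    obtain rfl := eq_attach_of_rootlize_adj_root hGV hr hrs h₁
    cases p₁ with
    | nil => exact absurd rfl hys
    | @cons _ x _ h₂ q =>
      simp only [Walk.cons_isPath_iff, Walk.support_cons, List.mem_cons, not_or] at hp
      obtain ⟨⟨hq, hsq⟩, -, hrq⟩ := hp
      have hx : x ∈ X := (eq_root_or_mem_of_rootlize_adj_attach hGV hs h₂).resolve_left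
        fun h => hrq (h ▸ q.start_mem_support)
      have hG : ∀ e ∈ q.edges, e ∈ G.edgeSet := by
        intro e he
        induction e using Sym2.ind with
        | _ a b =>
          have ha := q.fst_mem_support_of_mem_edges he
          have hb := q.snd_mem_support_of_mem_edges he
          exact (rootlize_adj_iff_of_ne (ne_of_mem_of_not_mem ha hrq) (ne_of_mem_of_not_mem ha hsq)
            (ne_of_mem_of_not_mem hb hrq) (ne_of_mem_of_not_mem hb hsq)).1
            (q.edges_subset_edgeSet he)
      refine ⟨x, hx, q.transfer G hG, hq.transfer hG, ?_⟩
      rw [walkWeight_transfer, walkWeight_rootlize_cons_cons hGV hXV hr hs hrs hFE hx _ _ q hrq]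

include hGV hr hrs in
lemma walkWeight_rootlize_path_attach {p : (Ĝ).Walk r s} (hp : p.IsPath) :
    walkWeight F̂ p = -1 := by
  cases p with
  | nil => exact absurd rfl hrs
  | @cons _ c _ h₁ p₁ =>
    obtain rfl := eq_attach_of_rootlize_adj_root hGV hr hrs h₁
    rw [Walk.isPath_iff_nil.1 hp.of_cons |>.eq_nil, walkWeight_cons, if_pos (.inr rfl),
      walkWeight_nil]
    rfl

include hXV hs hrs in
lemma rootlize_reachable_of_mem (hx : x ∈ X) : (Ĝ).Reachable r x :=
  (rootlize_adj_root_attach hrs).reachable.trans (rootlize_adj_attach_of_mem hXV hs hx).reachable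

include hGV hXV hr hs hrs hFE in
lemma le_distF_rootlize {c : ℤ} (hyV : y ∈ Vg) (hreach : (Ĝ).Reachable r y)
    (h : ∀ x ∈ X, ∀ q : G.Walk x y, q.IsPath → c ≤ walkWeight F q) : c ≤ distF Ĝ F̂ r y := by
  refine le_distF hreach fun p hp => ?_
  obtain ⟨x, hx, q, hq, hw⟩ := exists_path_of_rootlize_path hGV hXV hr hs hrs hFE hp
    (ne_of_mem_of_not_mem hyV hr) (ne_of_mem_of_not_mem hyV hs)
  exact hw ▸ h x hx q hq

variable [Fintype V]

include hGV hXV hr hs hrs hFE in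
lemma distF_rootlize_le (hx : x ∈ X) {q : G.Walk x y} (hq : q.IsPath) :
    distF Ĝ F̂ r y ≤ walkWeight F q := by
  obtain ⟨p, hp, hw⟩ := exists_rootlize_path_of_path hGV hXV hr hs hrs hFE hx hq
  exact hw ▸ distF_le_walkWeight hp

include hGV hXV hr hs hrs hFE in
lemma exists_walkWeight_eq_distF_rootlize (hyV : y ∈ Vg) (hreach : (Ĝ).Reachable r y) :
    ∃ x ∈ X, ∃ q : G.Walk x y, q.IsPath ∧ walkWeight F q = distF Ĝ F̂ r y := by
  obtain ⟨p, hp, hw⟩ := exists_isPath_walkWeight_eq_distF (F := F̂) hreach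
  obtain ⟨x, hx, q, hq, hq'⟩ := exists_path_of_rootlize_path hGV hXV hr hs hrs hFE hp
    (ne_of_mem_of_not_mem hyV hr) (ne_of_mem_of_not_mem hyV hs)
  exact ⟨x, hx, q, hq, hq'.trans hw⟩

include hGV hr hrs in
lemma distF_rootlize_attach : distF Ĝ F̂ r s = -1 := by
  have hrs' := rootlize_adj_root_attach (G := G) (X := X) hrs
  have hp := hrs'.isPath_toWalk
  refine le_antisymm ?_ (le_distF hrs'.reachable fun p hp => ?_)
  · exact walkWeight_rootlize_path_attach hGV hr hrs hp ▸ distF_le_walkWeight hp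
  · exact (walkWeight_rootlize_path_attach hGV hr hrs hp).ge

include hGV hXV hr hs hrs hFE in
lemma distF_rootlize_of_mem (hX : IsExtremeSet G F X) (hx : x ∈ X) : distF Ĝ F̂ r x = 0 :=
  le_antisymm (by simpa using distF_rootlize_le hGV hXV hr hs hrs hFE hx Walk.IsPath.nil)
    (le_distF_rootlize hGV hXV hr hs hrs hFE (hXV hx) (rootlize_reachable_of_mem hXV hs hrs hx)
      fun x' hx' _ hq => (hX x' hx' x hx).trans (distF_le_walkWeight hq))

include hGV hXV hr hs hrs hFE in
lemma distF_rootlize_neg (hy : y ∈ Dset G F Vg X) : distF Ĝ F̂ r y < 0 := by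
  obtain ⟨-, -, x, hx, hxy⟩ := hy
  obtain ⟨q, hq, hw⟩ :=
    exists_isPath_walkWeight_eq_distF (F := F) (reachable_of_distF_ne_zero hxy.ne)
  exact (distF_rootlize_le hGV hXV hr hs hrs hFE hx hq).trans_lt (hw ▸ hxy)

include hGV hXV hr hs hrs hFE in
lemma mem_Dset_of_distF_rootlize_nonpos (hbip : IsBipartitionOn G Vg A B)
    (hX : MaxBipExtreme G F A B X) (hyV : y ∈ Vg) (hyX : y ∉ X) (hreach : (Ĝ).Reachable r y)
    (hy : distF Ĝ F̂ r y ≤ 0) : y ∈ Dset G F Vg X := by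
  by_contra hyD
  have hnonneg : ∀ x ∈ X, 0 ≤ distF G F x y :=
    fun x hx => not_lt.1 fun h => hyD ⟨hyV, hyX, x, hx, h⟩
  have hpos := le_distF_rootlize hGV hXV hr hs hrs hFE (c := 1) hyV hreach fun x hx q hq => by
    have hq0 : walkWeight F q ≠ 0 := fun h => hyX <|
      hX.mem_of_even_length hbip hx q (even_length_of_walkWeight_eq_zero h) hnonneg
    have := (hnonneg x hx).trans (distF_le_walkWeight hq)
    omega
  omega

include hGV hXV hr hs hrs in
lemma distF_rootlize_le_add_one (hF : IsMinJoin G T F) (hadj : G.Adj x y)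
    (hreach : (Ĝ).Reachable r x) : distF Ĝ F̂ r y ≤ distF Ĝ F̂ r x + 1 := by
  obtain ⟨x₀, hx₀, q, hq, hw⟩ :=
    exists_walkWeight_eq_distF_rootlize hGV hXV hr hs hrs hF.1.1 (hGV _ _ hadj).1 hreach
  obtain ⟨q', hq', hle⟩ := hF.exists_isPath_walkWeight_le_add_one hq hadj
  exact (distF_rootlize_le hGV hXV hr hs hrs hF.1.1 hx₀ hq').trans (hw ▸ hle)

include hGV hr hrs in
lemma attach_mem_initComp : s ∈ initComp Ĝ F̂ r :=
  mem_initComp_of_adj self_mem_initComp (rootlize_adj_root_attach hrs)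
    (by rw [distF_rootlize_attach hGV hr hrs]; norm_num)

include hGV hXV hr hs hrs hFE in
lemma mem_initComp_of_mem (hX : IsExtremeSet G F X) (hx : x ∈ X) : x ∈ initComp Ĝ F̂ r :=
  mem_initComp_of_adj (attach_mem_initComp hGV hr hrs) (rootlize_adj_attach_of_mem hXV hs hx)
    (distF_rootlize_of_mem hGV hXV hr hs hrs hFE hX hx).le

include hGV hXV hr hs hrs in
lemma mem_initComp_of_walk (hF : IsMinJoin G T F) (hbip : IsBipartitionOn G Vg A B)
    (hX : MaxBipExtreme G F A B X) (p : G.Walk y x) (hx : x ∈ X) (hy : distF Ĝ F̂ r y < 0) :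
    y ∈ initComp Ĝ F̂ r := by
  induction p with
  | nil => exact mem_initComp_of_mem hGV hXV hr hs hrs hF.1.1 hX.1 hx
  | @cons y c _ h _ ih =>
    have hreach : (Ĝ).Reachable r y := reachable_of_distF_ne_zero hy.ne
    have hc : distF Ĝ F̂ r c ≤ 0 := by
      have := distF_rootlize_le_add_one hGV hXV hr hs hrs hF h hreach
      omega
    have hcI : c ∈ initComp Ĝ F̂ r := by
      by_cases hcX : c ∈ X
      · exact mem_initComp_of_mem hGV hXV hr hs hrs hF.1.1 hX.1 hcX
      · refine ih hx (distF_rootlize_neg hGV hXV hr hs hrs hF.1.1 ?_)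
        exact mem_Dset_of_distF_rootlize_nonpos hGV hXV hr hs hrs hF.1.1 hbip hX (hGV _ _ h).2 hcX
          (hreach.trans (le_rootlize h).reachable) hc
    exact mem_initComp_of_adj hcI (le_rootlize h.symm) hy.le

include hGV hXV hr hs hrs in
lemma mem_initComp_of_mem_Dset (hF : IsMinJoin G T F) (hbip : IsBipartitionOn G Vg A B)
    (hX : MaxBipExtreme G F A B X) (hy : y ∈ Dset G F Vg X) : y ∈ initComp Ĝ F̂ r := by
  obtain ⟨-, -, x, hx, hxy⟩ := id hy
  obtain ⟨p⟩ := reachable_of_distF_ne_zero hxy.ne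
  exact mem_initComp_of_walk hGV hXV hr hs hrs hF hbip hX p.reverse hx
    (distF_rootlize_neg hGV hXV hr hs hrs hF.1.1 hy)

include hGV hXV hr hs hrs in
theorem initComp_rootlize (hF : IsMinJoin G T F) (hbip : IsBipartitionOn G Vg A B)
    (hX : MaxBipExtreme G F A B X) :
    initComp Ĝ F̂ r = (X ∪ {r}) ∪ (Dset G F Vg X ∪ {s}) := by
  ext z
  constructor
  · intro hz
    by_cases hzr : z = r
    · exact .inl (.inr hzr)
    by_cases hzs : z = s
    · exact .inr (.inr hzs)
    by_cases hzX : z ∈ X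
    · exact .inl (.inl hzX)
    have hreach := reachable_of_mem_initComp hz
    exact .inr (.inl (mem_Dset_of_distF_rootlize_nonpos hGV hXV hr hs hrs hF.1.1 hbip hX
      (mem_of_rootlize_reachable hGV hXV hreach hzr hzs) hzX hreach
      (distF_nonpos_of_mem_initComp hz)))
  · rintro ((hz | rfl) | (hz | rfl))
    · exact mem_initComp_of_mem hGV hXV hr hs hrs hF.1.1 hX.1 hz
    · exact self_mem_initComp
    · exact mem_initComp_of_mem_Dset hGV hXV hr hs hrs hF hbip hX hz
    · exact attach_mem_initComp hGV hr hrs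

end Rootlization

end Development

lemma sep_union_eq_of_eq_zero_of_neg {α : Type*} {f : α → ℤ} {P N : Set α}
    (hP : ∀ z ∈ P, f z = 0) (hN : ∀ z ∈ N, f z < 0) :
    {z ∈ P ∪ N | f z = 0} = P ∧ {z ∈ P ∪ N | f z < 0} = N := by
  refine ⟨Set.ext fun z => ⟨?_, fun hz => ⟨.inl hz, hP z hz⟩⟩,
    Set.ext fun z => ⟨?_, fun hz => ⟨.inr hz, hN z hz⟩⟩⟩
  · rintro ⟨hz | hz, h⟩
    exacts [hz, absurd h (hN z hz).ne]
  · rintro ⟨hz | hz, h⟩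
    exacts [absurd (hP z hz) h.ne, hz]

theorem stmt_15_general [Fintype V] (G : SimpleGraph V) (Vg T A B X : Set V)
    (F : Set (Sym2 V)) (r s : V)
    (hGV : ∀ v w : V, G.Adj v w → v ∈ Vg ∧ w ∈ Vg)
    (hbip : IsBipartitionOn G Vg A B)
    (hF : IsMinJoin G T F) (hXV : X ⊆ Vg) (hX : MaxBipExtreme G F A B X)
    (hr : r ∉ Vg) (hs : s ∉ Vg) (hrs : r ≠ s) :
    initComp (rootlize G X r s) (F ∪ {s(r, s)}) r = (X ∪ {r}) ∪ (Dset G F Vg X ∪ {s}) ∧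
    {x ∈ initComp (rootlize G X r s) (F ∪ {s(r, s)}) r |
      distF (rootlize G X r s) (F ∪ {s(r, s)}) r x = 0} = X ∪ {r} ∧
    {x ∈ initComp (rootlize G X r s) (F ∪ {s(r, s)}) r |
      distF (rootlize G X r s) (F ∪ {s(r, s)}) r x < 0} = Dset G F Vg X ∪ {s} := by
  rw [initComp_rootlize hGV hXV hr hs hrs hF hbip hX]
  refine ⟨rfl, sep_union_eq_of_eq_zero_of_neg ?_ ?_⟩
  · rintro z (hz | rfl)
    exacts [distF_rootlize_of_mem hGV hXV hr hs hrs hF.1.1 hX.1 hz, distF_self]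
  · rintro z (hz | rfl)
    · exact distF_rootlize_neg hGV hXV hr hs hrs hF.1.1 hz
    · rw [distF_rootlize_attach hGV hr hrs]
      norm_num

/-- for a maximal bipartitic extreme set `X` of a bipartite graft and its
rootlization with mount `X`, root `r` and attachment `s`, the set `X̂ ∪ D̂_X` (where
`X̂ = X ∪ {r}` and `D̂_X = D_X ∪ {s}`) induces the initial component of `r` in `(Ĝ, T̂)`,
and `A(r) = X̂` and `D(r) = D̂_X`. -/
theorem stmt_15 [Fintype V] (G : SimpleGraph V) (Vg T A B X : Set V)
    (F : Set (Sym2 V)) (r s : V)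
    (hGV : ∀ v w : V, G.Adj v w → v ∈ Vg ∧ w ∈ Vg)
    (hT : T ⊆ Vg) (hGT : IsGraft G T)
    (hbip : IsBipartitionOn G Vg A B)
    (hF : IsMinJoin G T F) (hXV : X ⊆ Vg) (hX : MaxBipExtreme G F A B X)
    (hr : r ∉ Vg) (hs : s ∉ Vg) (hrs : r ≠ s) :
    initComp (rootlize G X r s) (F ∪ {s(r, s)}) r = (X ∪ {r}) ∪ (Dset G F Vg X ∪ {s}) ∧
    {x ∈ initComp (rootlize G X r s) (F ∪ {s(r, s)}) r |
      distF (rootlize G X r s) (F ∪ {s(r, s)}) r x = 0} = X ∪ {r} ∧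
    {x ∈ initComp (rootlize G X r s) (F ∪ {s(r, s)}) r |
      distF (rootlize G X r s) (F ∪ {s(r, s)}) r x < 0} = Dset G F Vg X ∪ {s} :=
  stmt_15_general G Vg T A B X F r s hGV hbip hF hXV hX hr hs hrs
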